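/- arXiv:1910.00328 — 3 statements merged into one kernel-verified Lean document; each statement's English description precedes it below -/
import Mathlib

section
/- Assume the setting described in the context, with α < 2 ≤ m and η ∈ (0,1). Then there exists a constant C > 0 depending only on N, α, m, ε, η, κ₁ such that Q^{int}_G(u_φ^+, φ₊) ≤ C C_{φ₊} |{x ∈ ℝ^N : u(x) > φ₊(x)}|. -/
noncomputable section
open MeasureTheory Metric Set
open scoped ENNReal

/-- `ℝ^N`. -/
abbrev Rn (N : ℕ) : Type := EuclideanSpace ℝ (Fin N)

/-- `Ψ_ε(x) = (|x|^ε − 2)_+`. -/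
noncomputable def Psi (N : ℕ) (ε : ℝ) (x : Rn N) : ℝ := max (‖x‖ ^ ε - 2) 0

/-- `D_G(a,b) = (G(a)−G(b))/(a−b)` for `a ≠ b`, `D_G(a,a) = G′(a)`, with `G(z) = z^{m−1}`. -/
noncomputable def DG (m a b : ℝ) : ℝ :=
  if a = b then (m - 1) * a ^ (m - 2) else (a ^ (m - 1) - b ^ (m - 1)) / (a - b)

/-- `B_G(v,w) = κ₀ ∬ (v(y)−v(x))(w(y)−w(x)) D_G(u(x),u(y)) |y−x|^{−(N+α)} dx dy`. -/
noncomputable def BG (N : ℕ) (α m κ₀ : ℝ) (u v w : Rn N → ℝ) : ℝ :=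
  κ₀ * ∫ q : Rn N × Rn N,
    (v q.2 - v q.1) * (w q.2 - w q.1) * DG m (u q.1) (u q.2)
      * ‖q.2 - q.1‖ ^ (-((N : ℝ) + α))

/-- `Q_G(v,w)` restricted to a region `S ⊆ ℝ^N × ℝ^N`:
`κ₁ ∬_S v(x)(w(y)−w(x)) D_G(u(x),u(y)) ((∇φ(x)/φ(x))·(y−x)) |y−x|^{−(N+α)} dx dy`,
where the factor `∇φ(x)/φ(x)` is interpreted as `0` where `φ(x) = 0`
(junk-value inversion). -/
noncomputable def QG (N : ℕ) (α m κ₁ : ℝ) (u φ : Rn N → ℝ)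
    (S : Set (Rn N × Rn N)) (v w : Rn N → ℝ) : ℝ :=
  κ₁ * ∫ q in S,
    v q.1 * (w q.2 - w q.1) * DG m (u q.1) (u q.2)
      * (inner ℝ ((φ q.1)⁻¹ • gradient φ q.1) (q.2 - q.1) : ℝ)
      * ‖q.2 - q.1‖ ^ (-((N : ℝ) + α))


open scoped ENNReal

lemma integrable_ker (N : ℕ) (hN : 1 ≤ N) (α η : ℝ) (hα : α ∈ Ioo (0:ℝ) 2) (hη : 0 < η) :
    IntegrableOn (fun z : Rn N => ‖z‖^2 * ‖z‖ ^ (-((N:ℝ) + α))) (closedBall 0 η) := by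
  haveI : Nonempty (Fin N) := ⟨⟨0, hN⟩⟩
  set p : ℝ := -((N:ℝ) + α) with hp
  clear_value p
  have hp0 : p ≤ 0 := by
    have h1 : (0:ℝ) ≤ (N:ℝ) := Nat.cast_nonneg N
    have h2 := hα.1.le
    simp only [hp, neg_nonpos]; linarith
  constructor
  · exact ((measurable_norm.pow_const 2).mul (by measurability)).aestronglyMeasurable
  · rw [hasFiniteIntegral_iff_ofReal]
    swap
    · filter_upwards with z
      exact mul_nonneg (by positivity) (Real.rpow_nonneg (norm_nonneg _) _)
    -- shells
    set t : ℕ → ℝ := fun k => η / 2 ^ (k+1) with ht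
    have htpos : ∀ k, 0 < t k := fun k => by positivity
    have ht2 : ∀ k, 2 * t k = η / 2 ^ k := by
      intro k; rw [ht]; field_simp; ring
    set shell : ℕ → Set (Rn N) := fun k => closedBall 0 (2 * t k) \ ball 0 (t k) with hshell
    have hcover : closedBall (0 : Rn N) η ⊆ {0} ∪ ⋃ k, shell k := by
      intro z hz
      rcases eq_or_ne z 0 with rfl | hz0
      · exact Or.inl rfl
      right
      have hzpos : 0 < ‖z‖ := norm_pos_iff.2 hz0
      have hex : ∃ k, t k ≤ ‖z‖ := by
        obtain ⟨k, hk⟩ := pow_unbounded_of_one_lt (η / ‖z‖) (one_lt_two (α := ℝ))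
        refine ⟨k, ?_⟩
        rw [ht]
        rw [div_le_iff₀ (by positivity)]
        have h2 : (2:ℝ) ^ k ≤ 2 ^ (k+1) := by
          apply pow_le_pow_right₀ one_le_two (Nat.le_succ k)
        nlinarith [hzpos, (div_lt_iff₀ hzpos).1 hk]
      classical
      let k := Nat.find hex
      refine mem_iUnion.2 ⟨k, ?_, ?_⟩
      · rw [mem_closedBall_zero_iff, ht2]
        rcases Nat.eq_zero_or_pos k with hk0 | hk0
        · rw [hk0]; simpa using (mem_closedBall_zero_iff.1 hz)
        · have := Nat.find_min hex (m := k - 1) (by omega)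
          push_neg at this
          have hkk : k - 1 + 1 = k := by omega
          simp only [ht] at this ⊢
          rw [hkk] at this
          exact this.le
      · rw [mem_ball_zero_iff]; push_neg
        exact Nat.find_spec hex
    calc ∫⁻ z in closedBall (0:Rn N) η, ENNReal.ofReal (‖z‖^2 * ‖z‖ ^ p)
        ≤ ∫⁻ z in ({0} ∪ ⋃ k, shell k : Set (Rn N)), ENNReal.ofReal (‖z‖^2 * ‖z‖ ^ p) :=
          lintegral_mono_set hcover
      _ ≤ (∫⁻ z in ({0} : Set (Rn N)), ENNReal.ofReal (‖z‖^2 * ‖z‖ ^ p))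
            + ∫⁻ z in (⋃ k, shell k), ENNReal.ofReal (‖z‖^2 * ‖z‖ ^ p) := lintegral_union_le _ _ _
      _ < ⊤ := by
          have h0 : (∫⁻ z in ({0} : Set (Rn N)), ENNReal.ofReal (‖z‖^2 * ‖z‖ ^ p)) = 0 := by
            rw [Measure.restrict_singleton]
            simp [measure_singleton]
          rw [h0, zero_add]
          set r0 : ℝ := (1/2 : ℝ) ^ (2 - α) with hr0
          have hr0nn : 0 ≤ r0 := Real.rpow_nonneg (by norm_num) _
          have hr0lt : r0 < 1 := Real.rpow_lt_one (by norm_num) (by norm_num) (by linarith [hα.2])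
          set c0 : ℝ := 2 ^ (2 + N) * η ^ (2 - α) with hc0
          have hc0nn : 0 ≤ c0 := mul_nonneg (by positivity) (Real.rpow_nonneg hη.le _)
          clear_value r0 c0
          set V : ℝ≥0∞ := volume (ball (0 : Rn N) 1) with hV
          have hVlt : V < ⊤ := measure_ball_lt_top
          have hstep : ∀ k, (∫⁻ z in shell k, ENNReal.ofReal (‖z‖^2 * ‖z‖ ^ p))
              ≤ ENNReal.ofReal (c0 * r0 ^ (k+1)) * V := by
            intro k
            have hb : ∀ z ∈ shell k, ENNReal.ofReal (‖z‖^2 * ‖z‖ ^ p)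
                ≤ ENNReal.ofReal ((2 * t k)^2 * (t k) ^ p) := by
              intro z hz
              obtain ⟨hz1, hz2⟩ := hz
              rw [mem_closedBall_zero_iff] at hz1
              rw [mem_ball_zero_iff, not_lt] at hz2
              apply ENNReal.ofReal_le_ofReal
              have h1 : ‖z‖^2 ≤ (2 * t k)^2 := by nlinarith [norm_nonneg z, htpos k]
              have h2 : ‖z‖ ^ p ≤ (t k) ^ p :=
                Real.rpow_le_rpow_of_nonpos (htpos k) hz2 hp0
              exact mul_le_mul h1 h2 (Real.rpow_nonneg (norm_nonneg z) _) (by positivity)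
            have hmeas : MeasurableSet (shell k) :=
              measurableSet_closedBall.diff measurableSet_ball
            calc (∫⁻ z in shell k, ENNReal.ofReal (‖z‖^2 * ‖z‖ ^ p))
                ≤ ∫⁻ _ in shell k, ENNReal.ofReal ((2 * t k)^2 * (t k) ^ p) :=
                  setLIntegral_mono measurable_const hb
              _ = ENNReal.ofReal ((2 * t k)^2 * (t k) ^ p) * volume (shell k) := by
                  rw [setLIntegral_const]
              _ ≤ ENNReal.ofReal ((2 * t k)^2 * (t k) ^ p)
                    * (ENNReal.ofReal ((2 * t k) ^ N) * V) := by
                  gcongr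
                  calc volume (shell k) ≤ volume (closedBall (0 : Rn N) (2 * t k)) :=
                        measure_mono diff_subset
                    _ = ENNReal.ofReal ((2 * t k) ^ N) * V := by
                        rw [Measure.addHaar_closedBall _ _ (by positivity : (0:ℝ) ≤ 2 * t k),
                          finrank_euclideanSpace_fin]
              _ = ENNReal.ofReal ((2 * t k)^2 * (t k) ^ p * (2 * t k) ^ N) * V := by
                  rw [← mul_assoc, ← ENNReal.ofReal_mul (by positivity)]
              _ = ENNReal.ofReal (c0 * r0 ^ (k+1)) * V := by
                  congr 1
                  set a : ℝ := t k with ha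
                  have hapos : 0 < a := htpos k
                  have haη : a = η * ((1:ℝ)/2)^(k+1) := by
                    rw [ha]; simp only [ht]
                    rw [div_eq_mul_inv, one_div, inv_pow]
                  clear_value a
                  have step1 : (2*a)^2 * a ^ p * (2*a)^N = 2^(2+N) * (a^(2+N) * a ^ p) := by
                    rw [pow_add]; ring
                  have step2 : a^(2+N) * a ^ p = a ^ (2-α) := by
                    rw [← Real.rpow_natCast a (2+N), ← Real.rpow_add hapos]
                    congr 1
                    simp only [hp]; push_cast; ring
                  have step3 : a ^ (2-α) = η ^ (2-α) * r0 ^ (k+1) := by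
                    rw [haη, Real.mul_rpow hη.le (by positivity)]
                    congr 1
                    rw [hr0, ← Real.rpow_natCast ((1:ℝ)/2) (k+1), ← Real.rpow_mul (by norm_num),
                      mul_comm, Real.rpow_mul (by norm_num), Real.rpow_natCast]
                  rw [step1, step2, step3, hc0]
                  ring
          calc (∫⁻ z in (⋃ k, shell k), ENNReal.ofReal (‖z‖^2 * ‖z‖ ^ p))
              ≤ ∑' k, ∫⁻ z in shell k, ENNReal.ofReal (‖z‖^2 * ‖z‖ ^ p) :=
                lintegral_iUnion_le _ _
            _ ≤ ∑' k, ENNReal.ofReal (c0 * r0 ^ (k+1)) * V := ENNReal.tsum_le_tsum hstep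
            _ = (∑' k, ENNReal.ofReal (c0 * r0 ^ (k+1))) * V := ENNReal.tsum_mul_right
            _ = (∑' k : ℕ, ENNReal.ofReal c0 * (ENNReal.ofReal r0 * ENNReal.ofReal r0 ^ k)) * V := by
                congr 1
                apply tsum_congr
                intro k
                rw [ENNReal.ofReal_mul hc0nn, pow_succ', ENNReal.ofReal_mul hr0nn,
                  ENNReal.ofReal_pow hr0nn]
            _ = ENNReal.ofReal c0 * (ENNReal.ofReal r0 * (∑' k : ℕ, ENNReal.ofReal r0 ^ k)) * V := by
                rw [ENNReal.tsum_mul_left, ENNReal.tsum_mul_left, mul_assoc]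
            _ < ⊤ := by
                rw [ENNReal.tsum_geometric]
                have hlt : ENNReal.ofReal r0 < 1 := by
                  rw [← ENNReal.ofReal_one]
                  exact ENNReal.ofReal_lt_ofReal_iff_of_nonneg hr0nn |>.2 hr0lt
                have hne : (1 - ENNReal.ofReal r0) ≠ 0 := by
                  rw [ne_eq, tsub_eq_zero_iff_le]
                  exact not_le.2 hlt
                have h1 : (1 - ENNReal.ofReal r0)⁻¹ < ⊤ :=
                  ENNReal.inv_lt_top.2 (pos_iff_ne_zero.2 hne)
                exact ENNReal.mul_lt_top (ENNReal.mul_lt_top ENNReal.ofReal_lt_top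
                  (ENNReal.mul_lt_top ENNReal.ofReal_lt_top h1)) hVlt


lemma norm_gradient_eq (N : ℕ) (φ : Rn N → ℝ) (x : Rn N) :
    ‖gradient φ x‖ = ‖fderiv ℝ φ x‖ := by
  unfold gradient
  exact LinearIsometryEquiv.norm_map _ _

lemma mvt_scaled (N : ℕ) (φ : Rn N → ℝ) (hφ : ContDiff ℝ (⊤ : ℕ∞) φ) (c Cφ : ℝ) (hc : 0 ≤ c)
    (hb : ∀ z : Rn N, c * ‖gradient φ z‖ ≤ Cφ) (x y : Rn N) :
    c * |φ y - φ x| ≤ Cφ * ‖y - x‖ := by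
  have hdiff : ∀ z ∈ (univ : Set (Rn N)), DifferentiableAt ℝ (fun w => c * φ w) z :=
    fun z _ => ((hφ.differentiable (by simp)) z).const_mul c
  have hbound : ∀ z ∈ (univ : Set (Rn N)), ‖fderiv ℝ (fun w => c * φ w) z‖ ≤ Cφ := by
    intro z _
    rw [fderiv_const_mul ((hφ.differentiable (by simp)) z) c]
    rw [norm_smul, Real.norm_eq_abs, abs_of_nonneg hc]
    rw [← norm_gradient_eq]
    exact hb z
  have := convex_univ.norm_image_sub_le_of_norm_fderiv_le hdiff hbound (mem_univ x) (mem_univ y)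
  calc c * |φ y - φ x| = ‖c * φ y - c * φ x‖ := by
        rw [Real.norm_eq_abs, ← mul_sub, abs_mul, abs_of_nonneg hc]
    _ ≤ Cφ * ‖y - x‖ := this


lemma DG_bound (m M a b : ℝ) (hm : 2 ≤ m) (hM : 1 ≤ M) (ha : a ∈ Icc 0 M) (hb : b ∈ Icc 0 M) :
    |DG m a b| ≤ (m - 1) * M ^ (m - 2) := by
  have hM0 : (0:ℝ) < M := lt_of_lt_of_le one_pos hM
  have hm1 : (1:ℝ) ≤ m - 1 := by linarith
  have key : ∀ t ∈ Icc (0:ℝ) M, t ^ (m-2) ≤ M ^ (m-2) := fun t ht =>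
    Real.rpow_le_rpow ht.1 ht.2 (by linarith)
  unfold DG
  by_cases hab : a = b
  · rw [if_pos hab, abs_of_nonneg (mul_nonneg (by linarith) (Real.rpow_nonneg ha.1 _))]
    exact mul_le_mul_of_nonneg_left (key a ha) (by linarith)
  · rw [if_neg hab, abs_div]
    rw [div_le_iff₀ (by simp [sub_ne_zero.2 hab, abs_pos])]
    have hd : ∀ t ∈ Icc (0:ℝ) M, HasDerivWithinAt (fun s : ℝ => s ^ (m-1))
        ((m-1) * t ^ (m-2)) (Icc 0 M) t := by
      intro t _
      have := (Real.hasDerivAt_rpow_const (x := t) (p := m - 1) (Or.inr hm1))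
      have h2 : m - 1 - 1 = m - 2 := by ring
      rw [h2] at this
      exact this.hasDerivWithinAt
    have bound : ∀ t ∈ Icc (0:ℝ) M, ‖(m-1) * t ^ (m-2)‖ ≤ (m-1) * M ^ (m-2) := by
      intro t ht
      rw [Real.norm_eq_abs, abs_of_nonneg (mul_nonneg (by linarith) (Real.rpow_nonneg ht.1 _))]
      exact mul_le_mul_of_nonneg_left (key t ht) (by linarith)
    have := (convex_Icc (0:ℝ) M).norm_image_sub_le_of_norm_hasDerivWithin_le hd bound hb ha
    simpa [Real.norm_eq_abs] using this

def shearT (N : ℕ) : (Rn N × Rn N) ≃ᵐ (Rn N × Rn N) where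
  toEquiv :=
  { toFun := fun p => (p.1, p.2 - p.1)
    invFun := fun p => (p.1, p.2 + p.1)
    left_inv := fun p => by simp
    right_inv := fun p => by simp }
  measurable_toFun := measurable_fst.prodMk (measurable_snd.sub measurable_fst)
  measurable_invFun := measurable_fst.prodMk (measurable_snd.add measurable_fst)


set_option maxHeartbeats 2000000 in
/-- Lemma 3.7 of the paper: for `α < 2 ≤ m` and `η ∈ (0,1)`,
`Q^{int}_G(u_φ^+, φ₊) ≤ C C_{φ₊} |{u > φ₊}|`. -/
theorem Qint_plus_zero (N : ℕ) (hN : 1 ≤ N) (α m ε η κ₁ : ℝ)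
    (hα : α ∈ Ioo (0 : ℝ) 2) (hm : 2 ≤ m) (hε : 0 < ε)
    (hη : η ∈ Ioo (0 : ℝ) 1) (hκ₁ : 0 < κ₁) :
    ∃ C : ℝ, 0 < C ∧
      ∀ u : Rn N → ℝ, Measurable u →
        (∀ x : Rn N, 0 ≤ u x ∧ u x ≤ 1 + Psi N ε x) →
      ∀ (φ : Rn N → ℝ) (Cφ : ℝ), ContDiff ℝ (⊤ : ℕ∞) φ →
        (∀ x : Rn N, 1/4 < φ x ∧ φ x ≤ 1 + Psi N ε x) →
        (∀ x : Rn N, (2 : ℝ) ^ (1/ε) ≤ ‖x‖ → φ x = 1 + Psi N ε x) →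
        (∀ x : Rn N, ‖gradient φ x‖ / φ x + ‖gradient φ x‖
            + (‖gradient φ x‖ / φ x) ^ 2 + ‖gradient φ x‖ ^ 2 ≤ Cφ) →
        QG N α m κ₁ u φ {q : Rn N × Rn N | dist q.1 q.2 ≤ η}
            (fun x => max (u x - φ x) 0) φ
          ≤ C * Cφ * (volume {x : Rn N | φ x < u x}).toReal := by
  have hα0 := hα.1
  have hα2 := hα.2
  set p : ℝ := -((N:ℝ) + α) with hp
  -- constants
  set R : ℝ := (2:ℝ) ^ (1/ε) with hR
  have hR1 : (1:ℝ) ≤ R := by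
    have := Real.rpow_le_rpow_of_exponent_le (one_le_two (α := ℝ))
      (le_of_lt (by positivity : (0:ℝ) < 1/ε))
    simpa [hR] using this
  have hRε : R ^ ε = 2 := by
    rw [hR, ← Real.rpow_mul (by norm_num : (0:ℝ) ≤ 2), one_div,
      inv_mul_cancel₀ hε.ne', Real.rpow_one]
  set M : ℝ := 1 + max ((R+1) ^ ε - 2) 0 with hM
  have hM1 : (1:ℝ) ≤ M := le_add_of_nonneg_right (le_max_right _ _)
  set K : ℝ := (m - 1) * M ^ (m - 2) with hK
  have hK0 : 0 ≤ K := mul_nonneg (by linarith) (Real.rpow_nonneg (by linarith) _)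
  set J : ℝ := ∫ z in closedBall (0 : Rn N) η, ‖z‖^2 * ‖z‖ ^ p with hJ
  have hJ0 : 0 ≤ J := by
    apply setIntegral_nonneg measurableSet_closedBall
    intro z _
    exact mul_nonneg (by positivity) (Real.rpow_nonneg (norm_nonneg _) _)
  refine ⟨κ₁ * (K * J) + 1, by positivity, ?_⟩
  intro u hu hu01 φ Cφ hφ hφb hφout hgrad
  set A : Set (Rn N) := {x | φ x < u x} with hA
  have hφcont : Continuous φ := hφ.continuous
  have hAmeas : MeasurableSet A := measurableSet_lt hφcont.measurable hu
  have hCφ0 : 0 ≤ Cφ := by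
    have hφ0 : (0:ℝ) < φ 0 := lt_trans (by norm_num) (hφb 0).1
    have t1 : 0 ≤ ‖gradient φ 0‖ / φ 0 := div_nonneg (norm_nonneg _) hφ0.le
    have := hgrad 0
    nlinarith [norm_nonneg (gradient φ 0), sq_nonneg (‖gradient φ 0‖ / φ 0),
      sq_nonneg ‖gradient φ 0‖]
  -- A is inside the ball of radius R
  have hA_ball : A ⊆ ball (0 : Rn N) R := by
    intro x hx
    rw [mem_ball_zero_iff]
    by_contra hxR
    push_neg at hxR
    have := hφout x hxR
    have h2 := (hu01 x).2
    have : u x ≤ φ x := by rw [this]; exact h2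
    exact absurd hx (by simp [hA, not_lt.2 this])
  have hAfin : volume A < ⊤ := lt_of_le_of_lt (measure_mono hA_ball) measure_ball_lt_top
  have hux1 : ∀ x ∈ A, u x ≤ 1 := by
    intro x hx
    have hxR : ‖x‖ < R := mem_ball_zero_iff.1 (hA_ball hx)
    have hΨ : Psi N ε x = 0 := by
      unfold Psi
      rw [max_eq_right]
      have : ‖x‖ ^ ε ≤ R ^ ε := Real.rpow_le_rpow (norm_nonneg _) hxR.le hε.le
      rw [hRε] at this
      linarith
    have := (hu01 x).2
    rw [hΨ] at this
    linarith
  have huM : ∀ y : Rn N, ‖y‖ ≤ R + 1 → u y ≤ M := by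
    intro y hy
    have hΨ : Psi N ε y ≤ max ((R+1) ^ ε - 2) 0 := by
      unfold Psi
      exact max_le_max (by
        have : ‖y‖ ^ ε ≤ (R+1) ^ ε := Real.rpow_le_rpow (norm_nonneg _) hy hε.le
        linarith) le_rfl
    have := (hu01 y).2
    rw [hM]
    linarith
  -- dominating function
  set F1 : Rn N → ℝ := indicator A (fun _ => (1:ℝ)) with hF1
  set F2 : Rn N → ℝ := indicator (closedBall (0:Rn N) η)
    (fun z => ‖z‖^2 * ‖z‖ ^ p) with hF2
  set g : (Rn N × Rn N) → ℝ := fun q => K * Cφ * (F1 q.1 * F2 (q.2 - q.1)) with hg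
  have hF2nn : ∀ z, 0 ≤ F2 z := by
    intro z
    rw [hF2]
    apply indicator_nonneg
    intro z' _
    exact mul_nonneg (by positivity) (Real.rpow_nonneg (norm_nonneg _) _)
  have hF1nn : ∀ z, 0 ≤ F1 z := by
    intro z; rw [hF1]; apply indicator_nonneg; intro z' _; norm_num
  have hgnn : ∀ q, 0 ≤ g q := by
    intro q
    exact mul_nonneg (mul_nonneg hK0 hCφ0) (mul_nonneg (hF1nn _) (hF2nn _))
  have hF1i : Integrable F1 := by
    rw [hF1, integrable_indicator_iff hAmeas]
    exact integrableOn_const hAfin.ne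
  have hF2i : Integrable F2 := by
    rw [hF2, integrable_indicator_iff measurableSet_closedBall]
    exact integrable_ker N hN α η hα hη.1
  have hT : MeasurePreserving (fun z : Rn N × Rn N => (z.1, z.2 - z.1))
      ((volume : Measure (Rn N)).prod volume) ((volume : Measure (Rn N)).prod volume) :=
    measurePreserving_prod_sub volume volume
  have hemb : MeasurableEmbedding (fun z : Rn N × Rn N => (z.1, z.2 - z.1)) :=
    (shearT N).measurableEmbedding
  have hvol : (volume : Measure (Rn N × Rn N)) = (volume : Measure (Rn N)).prod volume :=
    Measure.volume_eq_prod _ _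
  have hEi : Integrable (fun q : Rn N × Rn N => F1 q.1 * F2 (q.2 - q.1)) := by
    rw [hvol]
    exact (hT.integrable_comp_emb hemb).2 (hF1i.mul_prod hF2i)
  have hgi : Integrable g := by
    rw [hg]
    exact hEi.const_mul (K * Cφ)
  have hgint : ∫ q, g q = K * Cφ * ((volume A).toReal * J) := by
    rw [hg]
    rw [integral_const_mul]
    congr 1
    have h1 : ∫ q : Rn N × Rn N, F1 q.1 * F2 (q.2 - q.1)
        = ∫ q : Rn N × Rn N, F1 q.1 * F2 q.2 := by
      rw [hvol]
      exact hT.integral_comp hemb (fun q => F1 q.1 * F2 q.2)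
    rw [h1, hvol, integral_prod_mul]
    congr 1
    · rw [hF1, integral_indicator_const (1:ℝ) hAmeas]; simp [Measure.real]
    · rw [hF2, integral_indicator measurableSet_closedBall, hJ]
  -- the integrand
  set S : Set (Rn N × Rn N) := {q : Rn N × Rn N | dist q.1 q.2 ≤ η} with hS
  have hSmeas : MeasurableSet S :=
    measurableSet_le (continuous_fst.dist continuous_snd).measurable measurable_const
  set f : (Rn N × Rn N) → ℝ := fun q =>
    (max (u q.1 - φ q.1) 0) * (φ q.2 - φ q.1) * DG m (u q.1) (u q.2)
      * (inner ℝ ((φ q.1)⁻¹ • gradient φ q.1) (q.2 - q.1) : ℝ)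
      * ‖q.2 - q.1‖ ^ p with hf
  have hdom : ∀ q ∈ S, ‖f q‖ ≤ g q := by
    rintro ⟨x, y⟩ hq
    have hdist : ‖y - x‖ ≤ η := by
      rw [← dist_eq_norm]
      rw [hS, mem_setOf_eq] at hq
      rw [dist_comm]
      exact hq
    by_cases hxA : x ∈ A
    · have hF1x : F1 x = 1 := by rw [hF1, indicator_of_mem hxA]
      have hF2v : F2 (y - x) = ‖y - x‖^2 * ‖y - x‖ ^ p := by
        rw [hF2, indicator_of_mem (mem_closedBall_zero_iff.2 hdist)]
      have hpx : (1:ℝ)/4 < φ x := (hφb x).1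
      have hpx0 : (0:ℝ) < φ x := lt_trans (by norm_num) hpx
      have hux : u x ≤ 1 := hux1 x hxA
      -- bound on v
      have hv : |max (u x - φ x) 0| ≤ 1 := by
        rw [abs_of_nonneg (le_max_right _ _)]
        apply max_le (by linarith) (by norm_num)
      -- bound on DG
      have hyR : ‖y‖ ≤ R + 1 := by
        have : ‖y‖ ≤ ‖x‖ + ‖y - x‖ := by
          simpa using norm_add_le x (y - x)
        have hxR : ‖x‖ < R := mem_ball_zero_iff.1 (hA_ball hxA)
        linarith [hη.2.le, hdist]
      have hDGb : |DG m (u x) (u y)| ≤ K := by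
        rw [hK]
        apply DG_bound m M (u x) (u y) hm hM1
        · exact ⟨(hu01 x).1, by linarith⟩
        · exact ⟨(hu01 y).1, huM y hyR⟩
      -- bound on the inner product
      set gx : ℝ := ‖gradient φ x‖ with hgx
      have hInner : |(inner ℝ ((φ x)⁻¹ • gradient φ x) (y - x) : ℝ)|
          ≤ (gx / φ x) * ‖y - x‖ := by
        calc |(inner ℝ ((φ x)⁻¹ • gradient φ x) (y - x) : ℝ)|
            ≤ ‖(φ x)⁻¹ • gradient φ x‖ * ‖y - x‖ := abs_real_inner_le_norm _ _
          _ = (gx / φ x) * ‖y - x‖ := by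
              rw [norm_smul, Real.norm_eq_abs, abs_of_pos (inv_pos.2 hpx0), hgx]
              rw [inv_mul_eq_div]
      -- MVT bound
      have hMVT : (gx / φ x) * |φ y - φ x| ≤ Cφ * ‖y - x‖ := by
        apply mvt_scaled N φ hφ (gx / φ x) Cφ (div_nonneg (norm_nonneg _) hpx0.le)
        intro z
        have h1 : (gx / φ x)^2 ≤ Cφ := by
          have := hgrad x
          have t1 : 0 ≤ ‖gradient φ x‖ / φ x := div_nonneg (norm_nonneg _) hpx0.le
          rw [hgx]
          nlinarith [norm_nonneg (gradient φ x), sq_nonneg ‖gradient φ x‖]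
        have h2 : ‖gradient φ z‖^2 ≤ Cφ := by
          have := hgrad z
          have hpz : (0:ℝ) < φ z := lt_trans (by norm_num) (hφb z).1
          have t1 : 0 ≤ ‖gradient φ z‖ / φ z := div_nonneg (norm_nonneg _) hpz.le
          nlinarith [norm_nonneg (gradient φ z), sq_nonneg (‖gradient φ z‖ / φ z)]
        nlinarith [sq_nonneg (gx / φ x - ‖gradient φ z‖)]
      have hkernn : (0:ℝ) ≤ ‖y - x‖ ^ p := Real.rpow_nonneg (norm_nonneg _) _
      have hfq : ‖f ((x, y) : Rn N × Rn N)‖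
          = |max (u x - φ x) 0| * |φ y - φ x| * |DG m (u x) (u y)|
            * |(inner ℝ ((φ x)⁻¹ • gradient φ x) (y - x) : ℝ)| * (‖y - x‖ ^ p) := by
        rw [hf]
        simp only [Real.norm_eq_abs, abs_mul]
        rw [abs_of_nonneg hkernn]
      rw [hfq]
      have hgq : g ((x, y) : Rn N × Rn N) = K * Cφ * (‖y - x‖^2 * ‖y - x‖ ^ p) := by
        rw [hg]
        simp only
        rw [hF1x, hF2v, one_mul]
      rw [hgq]
      calc |max (u x - φ x) 0| * |φ y - φ x| * |DG m (u x) (u y)|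
            * |(inner ℝ ((φ x)⁻¹ • gradient φ x) (y - x) : ℝ)| * (‖y - x‖ ^ p)
          ≤ 1 * |φ y - φ x| * K * ((gx / φ x) * ‖y - x‖) * (‖y - x‖ ^ p) := by
            gcongr
        _ = K * ((gx / φ x) * |φ y - φ x|) * (‖y - x‖ * ‖y - x‖ ^ p) := by ring
        _ ≤ K * (Cφ * ‖y - x‖) * (‖y - x‖ * ‖y - x‖ ^ p) := by
            gcongr
        _ = K * Cφ * (‖y - x‖^2 * ‖y - x‖ ^ p) := by ring
    · have hF1x : F1 x = 0 := by rw [hF1, indicator_of_notMem hxA]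
      have hvx : max (u x - φ x) 0 = 0 := by
        rw [max_eq_right]
        rw [hA, mem_setOf_eq, not_lt] at hxA
        linarith
      have : f ((x, y) : Rn N × Rn N) = 0 := by
        rw [hf]; simp only; rw [hvx]; ring
      rw [this]
      have : g ((x, y) : Rn N × Rn N) = 0 := by
        rw [hg]; simp only; rw [hF1x]; ring
      rw [this, norm_zero]
  -- assemble
  have hQ : QG N α m κ₁ u φ S (fun x => max (u x - φ x) 0) φ = κ₁ * ∫ q in S, f q := rfl
  rw [hQ]
  have hI1 : ∫ q in S, f q ≤ ∫ q in S, ‖f q‖ := by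
    calc ∫ q in S, f q ≤ ‖∫ q in S, f q‖ := le_abs_self _
      _ ≤ ∫ q in S, ‖f q‖ := norm_integral_le_integral_norm f
  have hI2 : ∫ q in S, ‖f q‖ ≤ ∫ q in S, g q := by
    apply integral_mono_of_nonneg
    · exact ae_of_all _ (fun q => norm_nonneg _)
    · exact hgi.restrict
    · exact (ae_restrict_iff' hSmeas).2 (ae_of_all _ hdom)
  have hI3 : ∫ q in S, g q ≤ ∫ q, g q := setIntegral_le_integral hgi (ae_of_all _ hgnn)
  have hImain : ∫ q in S, f q ≤ K * Cφ * ((volume A).toReal * J) := by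
    rw [← hgint]
    exact le_trans hI1 (le_trans hI2 hI3)
  have hAvol : (volume {x : Rn N | φ x < u x}).toReal = (volume A).toReal := rfl
  rw [hAvol]
  calc κ₁ * ∫ q in S, f q ≤ κ₁ * (K * Cφ * ((volume A).toReal * J)) := by
        exact mul_le_mul_of_nonneg_left hImain hκ₁.le
    _ = (κ₁ * (K * J)) * (Cφ * (volume A).toReal) := by ring
    _ ≤ (κ₁ * (K * J) + 1) * (Cφ * (volume A).toReal) := by
        apply mul_le_mul_of_nonneg_right (by linarith)
        exact mul_nonneg hCφ0 ENNReal.toReal_nonneg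
    _ = (κ₁ * (K * J) + 1) * Cφ * (volume A).toReal := by ring
end
end

section
/- Assume the setting described in the context, with α ∈ (1,2), m ≥ 2, 0 < ε < (α−1)/(m−1) and η ∈ (0,1). Then there exists a constant C > 0 depending only on N, α, m, ε, η, κ₁ such that Q^{out}_G(u_φ^+, u_φ^+) ≤ C C_{φ₊} |{x ∈ ℝ^N : u(x) > φ₊(x)}|. -/
noncomputable section
open MeasureTheory Metric Set
open scoped ENNReal

lemma abs_DG_le {m a b M : ℝ} (hm : 2 ≤ m) (ha : 0 ≤ a) (hb : 0 ≤ b)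
    (haM : a ≤ M) (hbM : b ≤ M) : |DG m a b| ≤ (m - 1) * M ^ (m - 2) := by
  have h1m : (1:ℝ) ≤ m - 1 := by linarith
  have key : ∀ x y : ℝ, 0 ≤ x → x < y → y ≤ M →
      |(x ^ (m-1) - y ^ (m-1)) / (x - y)| ≤ (m - 1) * M ^ (m - 2) := by
    intro x y hx hxy hyM
    obtain ⟨c, hc, hceq⟩ := exists_hasDerivAt_eq_slope (fun z : ℝ => z ^ (m-1))
      (fun z : ℝ => (m-1) * z ^ (m-1-1)) hxy
      (fun z _ => ((Real.hasDerivAt_rpow_const (p := m-1) (Or.inr h1m)).continuousAt).continuousWithinAt)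
      (fun z _ => Real.hasDerivAt_rpow_const (Or.inr h1m))
    have hc0 : 0 ≤ c := le_of_lt (lt_of_le_of_lt hx hc.1)
    have hcM : c ≤ M := le_trans hc.2.le hyM
    have hceq' : (m-1) * c ^ (m-1-1) = (y ^ (m-1) - x ^ (m-1)) / (y - x) := hceq
    rw [abs_div, abs_sub_comm, abs_sub_comm x y, ← abs_div, ← hceq',
      abs_of_nonneg (mul_nonneg (by linarith) (Real.rpow_nonneg hc0 _))]
    have hexp : m - 1 - 1 = m - 2 := by ring
    rw [hexp]
    exact mul_le_mul_of_nonneg_left (Real.rpow_le_rpow hc0 hcM (by linarith)) (by linarith)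
  rcases lt_trichotomy a b with h | h | h
  · rw [DG, if_neg (ne_of_lt h)]
    exact key a b ha h hbM
  · subst h
    rw [DG, if_pos rfl,
      abs_of_nonneg (mul_nonneg (by linarith) (Real.rpow_nonneg ha _))]
    exact mul_le_mul_of_nonneg_left (Real.rpow_le_rpow ha haM (by linarith)) (by linarith)
  · rw [DG, if_neg (ne_of_gt h)]
    calc |(a ^ (m-1) - b ^ (m-1)) / (a - b)|
        = |(b ^ (m-1) - a ^ (m-1)) / (b - a)| := by
          rw [abs_div, abs_sub_comm, abs_sub_comm a b, ← abs_div]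
      _ ≤ (m - 1) * M ^ (m - 2) := key b a hb h haM

set_option maxHeartbeats 2000000 in
/-- Lemma 3.8 of the paper: for `α ∈ (1,2)`, `0 < ε < (α−1)/(m−1)` and `η ∈ (0,1)`,
`Q^{out}_G(u_φ^+, u_φ^+) ≤ C C_{φ₊} |{u > φ₊}|`. -/
theorem Qout_plus_plus (N : ℕ) (hN : 1 ≤ N) (α m ε η κ₁ : ℝ)
    (hα : α ∈ Ioo (1 : ℝ) 2) (hm : 2 ≤ m) (hε : 0 < ε)
    (hεα : ε < (α - 1) / (m - 1)) (hη : η ∈ Ioo (0 : ℝ) 1) (hκ₁ : 0 < κ₁) :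
    ∃ C : ℝ, 0 < C ∧
      ∀ u : Rn N → ℝ, Measurable u →
        (∀ x : Rn N, 0 ≤ u x ∧ u x ≤ 1 + Psi N ε x) →
      ∀ (φ : Rn N → ℝ) (Cφ : ℝ), ContDiff ℝ (⊤ : ℕ∞) φ →
        (∀ x : Rn N, 1/4 < φ x ∧ φ x ≤ 1 + Psi N ε x) →
        (∀ x : Rn N, (2 : ℝ) ^ (1/ε) ≤ ‖x‖ → φ x = 1 + Psi N ε x) →
        (∀ x : Rn N, ‖gradient φ x‖ / φ x + ‖gradient φ x‖
            + (‖gradient φ x‖ / φ x) ^ 2 + ‖gradient φ x‖ ^ 2 ≤ Cφ) →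
        QG N α m κ₁ u φ {q : Rn N × Rn N | η ≤ dist q.1 q.2}
            (fun x => max (u x - φ x) 0) (fun x => max (u x - φ x) 0)
          ≤ C * Cφ * (volume {x : Rn N | φ x < u x}).toReal := by
  obtain ⟨hα1, hα2⟩ := hα
  obtain ⟨hη0, hη1⟩ := hη
  have hN1 : (1:ℝ) ≤ (N:ℝ) := by exact_mod_cast hN
  set R : ℝ := (2:ℝ) ^ (1/ε) with hR
  have hR1 : (1:ℝ) ≤ R := Real.one_le_rpow (by norm_num) (by positivity)
  set p : ℝ := ε*(m-2) + 1 - ((N:ℝ) + α) with hp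
  have hεm : ε*(m-1) < α - 1 := (lt_div_iff₀ (by linarith)).mp hεα
  have hεm2 : ε*(m-2) ≤ ε*(m-1) := by nlinarith
  have hp0 : p < 0 := by rw [hp]; linarith
  have hpN : (N:ℝ) < -p := by rw [hp]; linarith
  set c₂ : ℝ := 2/η^ε + (R/η+1)^ε with hc2
  have hc₂ : 0 < c₂ := by positivity
  set K : ℝ := (η/(1+η))^p with hKdef
  have hK0 : 0 < K := Real.rpow_pos_of_pos (by positivity) _
  set A : ℝ := (m-1)*c₂^(m-2)*K with hA
  have hA0 : 0 < A :=
    mul_pos (mul_pos (by linarith) (Real.rpow_pos_of_pos hc₂ _)) hK0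
  set J : ℝ≥0∞ := ∫⁻ z : Rn N, ENNReal.ofReal ((1+‖z‖)^p) with hJ
  have hJtop : J ≠ ⊤ := by
    have hint : Integrable (fun z : Rn N => (1+‖z‖) ^ p) volume := by
      have := integrable_one_add_norm (E := Rn N) (μ := volume) (r := -p)
        (by rw [finrank_euclideanSpace_fin]; exact hpN)
      simpa using this
    exact hint.lintegral_lt_top.ne
  refine ⟨κ₁ * A * J.toReal + 1, by
    have h1 : 0 ≤ κ₁ * A * J.toReal :=
      mul_nonneg (mul_nonneg hκ₁.le hA0.le) ENNReal.toReal_nonneg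
    linarith, ?_⟩
  intro u hu hu01 φ Cφ hφ hφbd hφout hφC
  set v : Rn N → ℝ := fun x => max (u x - φ x) 0 with hv
  set E : Set (Rn N) := {x : Rn N | φ x < u x} with hE
  have hEmeas : MeasurableSet E := measurableSet_lt hφ.continuous.measurable hu
  have hPsi0 : ∀ x : Rn N, ‖x‖ < R → Psi N ε x = 0 := by
    intro x hx
    have h2 : ‖x‖ ^ ε ≤ 2 := by
      calc ‖x‖ ^ ε ≤ R ^ ε := Real.rpow_le_rpow (norm_nonneg x) hx.le hε.le
        _ = 2 := by
          rw [hR, ← Real.rpow_mul (by norm_num : (0:ℝ) ≤ 2)]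
          rw [one_div_mul_cancel hε.ne', Real.rpow_one]
    exact max_eq_right (by linarith)
  have hv01 : ∀ x, 0 ≤ v x ∧ v x ≤ 1 := by
    intro x
    refine ⟨le_max_right _ _, ?_⟩
    rcases le_or_gt R ‖x‖ with h | h
    · have := hφout x h
      have h2 := (hu01 x).2
      exact max_le (by linarith) zero_le_one
    · have h0 := hPsi0 x h
      have h2 := (hu01 x).2
      have h3 := (hφbd x).1
      rw [h0] at h2
      exact max_le (by linarith) zero_le_one
  have hvE : ∀ x, x ∉ E → v x = 0 := by
    intro x hx
    simp only [hE, mem_setOf_eq, not_lt] at hx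
    exact max_eq_right (by linarith)
  have hEball : E ⊆ ball (0 : Rn N) R := by
    intro x hx
    simp only [hE, mem_setOf_eq] at hx
    rw [mem_ball_zero_iff]
    by_contra hc
    push_neg at hc
    have := hφout x hc
    have := (hu01 x).2
    linarith
  have hEvol : volume E ≠ ⊤ := ((measure_mono hEball).trans_lt measure_ball_lt_top).ne
  have hCφ0 : 0 ≤ Cφ := by
    have h0 := hφC 0
    have h1 : (0:ℝ) < φ 0 := lt_trans (by norm_num) (hφbd 0).1
    have h2 : 0 ≤ ‖gradient φ 0‖ / φ 0 := div_nonneg (norm_nonneg _) h1.le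
    nlinarith [norm_nonneg (gradient φ 0), sq_nonneg (‖gradient φ 0‖ / φ 0),
      sq_nonneg ‖gradient φ 0‖]
  set c : ℝ≥0∞ := ENNReal.ofReal (A * Cφ) with hcdef
  set G : Rn N × Rn N → ℝ≥0∞ := fun q =>
    (E.indicator (fun _ => (1:ℝ≥0∞)) q.1) * (c * ENNReal.ofReal ((1+‖q.2-q.1‖)^p)) with hGdef
  have hGmeas : Measurable G := by
    have hcont : Continuous fun q : Rn N × Rn N => (1+‖q.2-q.1‖)^p :=
      Continuous.rpow_const (continuous_const.add (continuous_snd.sub continuous_fst).norm)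
        (fun q => Or.inl (by positivity))
    exact ((measurable_const.indicator hEmeas).comp measurable_fst).mul
      (measurable_const.mul (ENNReal.measurable_ofReal.comp hcont.measurable))
  set F : Rn N × Rn N → ℝ := fun q =>
    v q.1 * (v q.2 - v q.1) * DG m (u q.1) (u q.2)
      * (inner ℝ ((φ q.1)⁻¹ • gradient φ q.1) (q.2 - q.1) : ℝ)
      * ‖q.2 - q.1‖ ^ (-((N : ℝ) + α)) with hF
  have hbound : ∀ q ∈ {q : Rn N × Rn N | η ≤ dist q.1 q.2},
      ENNReal.ofReal ‖F q‖ ≤ G q := by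
    rintro ⟨x, y⟩ hq
    simp only [mem_setOf_eq] at hq
    by_cases hxE : x ∈ E
    · set r : ℝ := ‖y - x‖ with hrdef
      have hηr : η ≤ r := by rwa [dist_eq_norm, norm_sub_rev] at hq
      have hr0 : 0 < r := lt_of_lt_of_le hη0 hηr
      have hxR : ‖x‖ < R := mem_ball_zero_iff.mp (hEball hxE)
      -- bound for DG
      have hMy : 2 + Psi N ε y ≤ c₂ * r ^ ε := by
        have h1 : ‖y‖ ≤ ‖x‖ + r := by
          have := norm_add_le x (y - x)
          simpa using this
        have h2 : Psi N ε y ≤ ‖y‖ ^ ε := by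
          have := Real.rpow_nonneg (norm_nonneg y) ε
          exact max_le (by linarith) this
        have h3 : ‖y‖ ^ ε ≤ ((R/η+1) * r) ^ ε := by
          apply Real.rpow_le_rpow (norm_nonneg y) _ hε.le
          have hRr : R ≤ (R/η) * r := by
            have : (R/η) * η ≤ (R/η) * r :=
              mul_le_mul_of_nonneg_left hηr (by positivity)
            calc R = (R/η) * η := by field_simp
              _ ≤ (R/η) * r := this
          nlinarith
        have h4 : ((R/η+1) * r) ^ ε = (R/η+1)^ε * r^ε :=
          Real.mul_rpow (by positivity) hr0.le
        have h5 : (2:ℝ) ≤ (2/η^ε) * r^ε := by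
          have hηε : η ^ ε ≤ r ^ ε := Real.rpow_le_rpow hη0.le hηr hε.le
          have hηε0 : (0:ℝ) < η ^ ε := Real.rpow_pos_of_pos hη0 _
          calc (2:ℝ) = (2/η^ε) * η^ε := by field_simp
            _ ≤ (2/η^ε) * r^ε := mul_le_mul_of_nonneg_left hηε (by positivity)
        rw [hc2]
        nlinarith
      have hPx : Psi N ε x = 0 := hPsi0 x hxR
      have hux : u x ≤ c₂ * r ^ ε := by
        have := (hu01 x).2
        have hP : 0 ≤ Psi N ε y := le_max_right _ _
        rw [hPx] at this
        linarith
      have huy : u y ≤ c₂ * r ^ ε := by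
        have := (hu01 y).2
        linarith
      have hbDG : |DG m (u x) (u y)| ≤ (m-1) * (c₂ * r^ε) ^ (m-2) :=
        abs_DG_le hm (hu01 x).1 (hu01 y).1 hux huy
      -- bound for the inner product factor
      have hφx : (0:ℝ) < φ x := lt_trans (by norm_num) (hφbd x).1
      have hbin : |(inner ℝ ((φ x)⁻¹ • gradient φ x) (y - x) : ℝ)| ≤ Cφ * r := by
        have h1 := abs_real_inner_le_norm ((φ x)⁻¹ • gradient φ x) (y - x)
        have h2 : ‖(φ x)⁻¹ • gradient φ x‖ = ‖gradient φ x‖ / φ x := by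
          rw [norm_smul, Real.norm_eq_abs, abs_inv, abs_of_pos hφx, div_eq_mul_inv, mul_comm]
        have h3 : ‖gradient φ x‖ / φ x ≤ Cφ := by
          have h4 := hφC x
          have h5 : 0 ≤ ‖gradient φ x‖ := norm_nonneg _
          nlinarith [sq_nonneg (‖gradient φ x‖ / φ x), sq_nonneg ‖gradient φ x‖]
        calc |(inner ℝ ((φ x)⁻¹ • gradient φ x) (y - x) : ℝ)|
            ≤ (‖gradient φ x‖ / φ x) * r := by rw [← h2]; exact h1
          _ ≤ Cφ * r := mul_le_mul_of_nonneg_right h3 hr0.le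
      -- piecewise abs bounds
      have hb1 : |v x| ≤ 1 := abs_le.mpr ⟨by linarith [(hv01 x).1], (hv01 x).2⟩
      have hb2 : |v y - v x| ≤ 1 := abs_le.mpr
        ⟨by linarith [(hv01 y).1, (hv01 x).2], by linarith [(hv01 y).2, (hv01 x).1]⟩
      have hB3 : (0:ℝ) ≤ (m-1) * (c₂ * r^ε) ^ (m-2) :=
        mul_nonneg (by linarith) (Real.rpow_nonneg (by positivity) _)
      have habs : |F (x, y)| ≤
          (m-1) * (c₂ * r^ε) ^ (m-2) * (Cφ * r) * (r ^ (-((N:ℝ) + α))) := by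
        have h12 : |v x * (v y - v x)| ≤ 1 := by
          rw [abs_mul]
          calc |v x| * |v y - v x| ≤ 1 * 1 :=
            mul_le_mul hb1 hb2 (abs_nonneg _) zero_le_one
          _ = 1 := mul_one 1
        have s1 : |v x * (v y - v x) * DG m (u x) (u y)| ≤ (m-1) * (c₂ * r^ε) ^ (m-2) := by
          rw [abs_mul]
          calc |v x * (v y - v x)| * |DG m (u x) (u y)|
              ≤ 1 * ((m-1) * (c₂ * r^ε) ^ (m-2)) :=
                mul_le_mul h12 hbDG (abs_nonneg _) zero_le_one
            _ = (m-1) * (c₂ * r^ε) ^ (m-2) := one_mul _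
        have s2 : |v x * (v y - v x) * DG m (u x) (u y)
            * (inner ℝ ((φ x)⁻¹ • gradient φ x) (y - x) : ℝ)|
            ≤ (m-1) * (c₂ * r^ε) ^ (m-2) * (Cφ * r) := by
          rw [abs_mul]
          exact mul_le_mul s1 hbin (abs_nonneg _) hB3
        show |v x * (v y - v x) * DG m (u x) (u y)
            * (inner ℝ ((φ x)⁻¹ • gradient φ x) (y - x) : ℝ) * ‖y - x‖ ^ (-((N:ℝ)+α))| ≤ _
        rw [abs_mul, abs_of_nonneg (Real.rpow_nonneg (norm_nonneg _) _)]
        exact mul_le_mul_of_nonneg_right s2 (Real.rpow_nonneg hr0.le _)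
      -- rpow algebra
      have heq1 : (m-1) * (c₂ * r^ε) ^ (m-2) * (Cφ * r) * (r ^ (-((N:ℝ)+α)))
          = ((m-1) * c₂^(m-2) * Cφ) * (r^(ε*(m-2)) * r^(1:ℝ) * r^(-((N:ℝ)+α))) := by
        rw [Real.mul_rpow hc₂.le (Real.rpow_nonneg hr0.le ε),
          ← Real.rpow_mul hr0.le, Real.rpow_one]
        ring
      have heq2 : r^(ε*(m-2)) * r^(1:ℝ) * r^(-((N:ℝ)+α)) = r ^ p := by
        rw [← Real.rpow_add hr0, ← Real.rpow_add hr0, hp]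
        congr 1 <;> ring
      have hrp : r ^ p ≤ K * (1+r)^p := by
        have hbase : 0 < η/(1+η) * (1+r) :=
          mul_pos (div_pos hη0 (by linarith)) (by linarith)
        have hbr : η/(1+η) * (1+r) ≤ r := by
          rw [div_mul_eq_mul_div, div_le_iff₀ (by linarith : (0:ℝ) < 1+η)]
          nlinarith
        calc r ^ p ≤ (η/(1+η) * (1+r)) ^ p :=
              Real.rpow_le_rpow_of_nonpos hbase hbr hp0.le
          _ = K * (1+r)^p := by
              rw [Real.mul_rpow (by positivity) (by linarith : (0:ℝ) ≤ 1+r), hKdef]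
      have hfin : |F (x, y)| ≤ A * Cφ * (1+r)^p := by
        have h6 : ((m-1) * c₂^(m-2) * Cφ) * (r ^ p)
            ≤ ((m-1) * c₂^(m-2) * Cφ) * (K * (1+r)^p) :=
          mul_le_mul_of_nonneg_left hrp
            (mul_nonneg (mul_nonneg (by linarith) (Real.rpow_nonneg hc₂.le _)) hCφ0)
        calc |F (x, y)| ≤ (m-1) * (c₂ * r^ε) ^ (m-2) * (Cφ * r) * (r ^ (-((N:ℝ)+α))) := habs
          _ = ((m-1) * c₂^(m-2) * Cφ) * (r ^ p) := by rw [heq1, heq2]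
          _ ≤ ((m-1) * c₂^(m-2) * Cφ) * (K * (1+r)^p) := h6
          _ = A * Cφ * (1+r)^p := by rw [hA]; ring
      -- conclude
      have hGval : G (x, y) = ENNReal.ofReal (A * Cφ * (1+r)^p) := by
        rw [hGdef]
        simp only [Set.indicator_of_mem hxE, one_mul]
        rw [hcdef, ← ENNReal.ofReal_mul (mul_nonneg hA0.le hCφ0)]
      rw [hGval]
      apply ENNReal.ofReal_le_ofReal
      rw [Real.norm_eq_abs]
      exact hfin
    · have hF0 : F (x, y) = 0 := by
        rw [hF]
        simp only
        rw [hvE x hxE]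
        ring
      rw [hF0]
      simp
  have hne2 : c * J ≠ ⊤ := ENNReal.mul_ne_top ENNReal.ofReal_ne_top hJtop
  have hGint : (∫⁻ q : Rn N × Rn N, G q) = volume E * (c * J) := by
    rw [Measure.volume_eq_prod, lintegral_prod _ hGmeas.aemeasurable]
    have hin : ∀ x : Rn N, (∫⁻ y, G (x, y)) =
        E.indicator (fun _ => (1:ℝ≥0∞)) x * (c * J) := by
      intro x
      have hne : E.indicator (fun _ => (1:ℝ≥0∞)) x * c ≠ ⊤ := by
        apply ENNReal.mul_ne_top _ ENNReal.ofReal_ne_top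
        by_cases hx : x ∈ E <;> simp [Set.indicator, hx]
      calc (∫⁻ y, G (x, y))
          = ∫⁻ y, (E.indicator (fun _ => (1:ℝ≥0∞)) x * c)
              * ENNReal.ofReal ((1+‖y - x‖)^p) := by
            rw [hGdef]; simp only [mul_assoc]
        _ = (E.indicator (fun _ => (1:ℝ≥0∞)) x * c)
              * ∫⁻ y, ENNReal.ofReal ((1+‖y - x‖)^p) :=
            lintegral_const_mul' _ _ hne
        _ = E.indicator (fun _ => (1:ℝ≥0∞)) x * (c * J) := by
            rw [lintegral_sub_right_eq_self
              (fun z : Rn N => ENNReal.ofReal ((1+‖z‖)^p)) x, ← hJ, mul_assoc]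
    simp only [hin]
    rw [lintegral_mul_const' _ _ hne2]
    have hind : (∫⁻ a : Rn N, E.indicator (fun _ => (1:ℝ≥0∞)) a) = volume E :=
      lintegral_indicator_one hEmeas
    rw [hind]
  have hGlt : (∫⁻ q : Rn N × Rn N, G q) ≠ ⊤ := by
    rw [hGint]; exact ENNReal.mul_ne_top hEvol hne2
  have hstep : (∫⁻ q in {q : Rn N × Rn N | η ≤ dist q.1 q.2}, ENNReal.ofReal ‖F q‖)
      ≤ ∫⁻ q : Rn N × Rn N, G q :=
    (setLIntegral_mono hGmeas hbound).trans (setLIntegral_le_lintegral _ _)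
  have hQ : QG N α m κ₁ u φ {q : Rn N × Rn N | η ≤ dist q.1 q.2} v v
      = κ₁ * ∫ q in {q : Rn N × Rn N | η ≤ dist q.1 q.2}, F q := rfl
  calc QG N α m κ₁ u φ {q : Rn N × Rn N | η ≤ dist q.1 q.2} v v
      = κ₁ * ∫ q in {q : Rn N × Rn N | η ≤ dist q.1 q.2}, F q := hQ
    _ ≤ κ₁ * ‖∫ q in {q : Rn N × Rn N | η ≤ dist q.1 q.2}, F q‖ := by
        rw [Real.norm_eq_abs]
        exact mul_le_mul_of_nonneg_left (le_abs_self _) hκ₁.le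
    _ ≤ κ₁ * (∫⁻ q in {q : Rn N × Rn N | η ≤ dist q.1 q.2},
          ENNReal.ofReal ‖F q‖).toReal :=
        mul_le_mul_of_nonneg_left (norm_integral_le_lintegral_norm _) hκ₁.le
    _ ≤ κ₁ * (∫⁻ q : Rn N × Rn N, G q).toReal :=
        mul_le_mul_of_nonneg_left (ENNReal.toReal_mono hGlt hstep) hκ₁.le
    _ = κ₁ * ((volume E).toReal * ((A * Cφ) * J.toReal)) := by
        rw [hGint, ENNReal.toReal_mul, ENNReal.toReal_mul, hcdef,
          ENNReal.toReal_ofReal (mul_nonneg hA0.le hCφ0)]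
    _ ≤ (κ₁ * A * J.toReal + 1) * Cφ * (volume E).toReal := by
        nlinarith [ENNReal.toReal_nonneg (a := volume E), ENNReal.toReal_nonneg (a := J),
          mul_nonneg hCφ0 (ENNReal.toReal_nonneg (a := volume E))]
end
end

section
/- Let m > 1 be a real number. Then: (i) for all a, b ≥ 0, (a−b)(a^{m−1}−b^{m−1}) ≥ (4(m−1)/m²) (a^{m/2}−b^{m/2})²; (ii) for all a, b ≥ 0, (a²−b²)(a^{m−1}−b^{m−1}) ≥ (8(m−1)/(m+1)²) (a^{(m+1)/2}−b^{(m+1)/2})²; (iii) for all a, b ≥ c > 0, (a−b)² ≤ c^{−(m−1)} (a^{(m+1)/2}−b^{(m+1)/2})². -/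
/-! Since `(a ^ u - b ^ u) / u = ∫ t in b..a, t ^ (u - 1)` and
`(t ^ ((u + v) / 2 - 1)) ^ 2 = t ^ (u - 1) * t ^ (v - 1)`, the Cauchy–Schwarz inequality for
integrals gives `((a ^ w - b ^ w) / w) ^ 2 ≤ (a ^ u - b ^ u) / u * ((a ^ v - b ^ v) / v)` with
`w = (u + v) / 2`; parts (i) and (ii) are the cases `(u, v) = (m - 1, 1)` and `(2, m - 1)`.
Part (iii) is the mean value bound `a ^ s - b ^ s ≥ s * c ^ (s - 1) * (a - b)` for
`s = (m + 1) / 2 ≥ 1` and `c ≤ b ≤ a`, squared. -/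

open MeasureTheory Set

theorem quadratic_nonneg_of_discrim_nonpos {a b c : ℝ} (ha : 0 ≤ a) (hc : 0 ≤ c)
    (h : discrim a b c ≤ 0) (x : ℝ) : 0 ≤ a * (x * x) + b * x + c := by
  unfold discrim at h
  rcases ha.eq_or_lt with rfl | ha
  · obtain rfl : b = 0 := pow_eq_zero_iff two_ne_zero |>.mp (by nlinarith [sq_nonneg b])
    simpa using hc
  · nlinarith [sq_nonneg (2 * a * x + b)]

theorem sq_integral_le_integral_mul_integral_of_sq_le_mul {f g h : ℝ → ℝ} {a b : ℝ}
    (hab : a ≤ b) (hf : IntervalIntegrable f volume a b) (hg : IntervalIntegrable g volume a b)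
    (hh : IntervalIntegrable h volume a b) (hf0 : ∀ t ∈ Ioo a b, 0 ≤ f t)
    (hg0 : ∀ t ∈ Ioo a b, 0 ≤ g t) (hhfg : ∀ t ∈ Ioo a b, h t ^ 2 ≤ f t * g t) :
    (∫ t in a..b, h t) ^ 2 ≤ (∫ t in a..b, f t) * ∫ t in a..b, g t := by
  have hquad : ∀ x : ℝ,
      0 ≤ (∫ t in a..b, g t) * (x * x) + (-2 * ∫ t in a..b, h t) * x + ∫ t in a..b, f t := by
    intro x
    have hgh : IntervalIntegrable (fun t => g t * (x * x) + -2 * h t * x) volume a b :=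
      (hg.mul_const _).add ((hh.const_mul _).mul_const _)
    calc 0 = ∫ _ in a..b, (0 : ℝ) := intervalIntegral.integral_zero.symm
      _ ≤ ∫ t in a..b, (g t * (x * x) + -2 * h t * x + f t) :=
        intervalIntegral.integral_mono_on_of_le_Ioo hab intervalIntegrable_const (hgh.add hf)
          fun t ht => quadratic_nonneg_of_discrim_nonpos (hg0 t ht) (hf0 t ht)
            (by unfold discrim; linarith [hhfg t ht]) x
      _ = _ := by
        rw [intervalIntegral.integral_add hgh hf,
          intervalIntegral.integral_add (hg.mul_const _) ((hh.const_mul _).mul_const _),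
          intervalIntegral.integral_mul_const, intervalIntegral.integral_mul_const,
          intervalIntegral.integral_const_mul]
  have := discrim_le_zero hquad
  unfold discrim at this
  linarith

theorem integral_rpow_sub_one {u : ℝ} (hu : 0 < u) (a b : ℝ) :
    ∫ t in b..a, t ^ (u - 1) = (a ^ u - b ^ u) / u := by
  simpa using integral_rpow (a := b) (b := a) (r := u - 1) (Or.inl (by linarith))

theorem sq_rpow_sub_rpow_div_midpoint_le_mul {u v a b : ℝ} (hu : 0 < u) (hv : 0 < v)
    (ha : 0 ≤ a) (hb : 0 ≤ b) :
    ((a ^ ((u + v) / 2) - b ^ ((u + v) / 2)) / ((u + v) / 2)) ^ 2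
      ≤ (a ^ u - b ^ u) / u * ((a ^ v - b ^ v) / v) := by
  wlog hba : b ≤ a generalizing a b
  · convert this hb ha (le_of_not_ge hba) using 1 <;> ring
  have key := sq_integral_le_integral_mul_integral_of_sq_le_mul
    (f := fun t => t ^ (u - 1)) (g := fun t => t ^ (v - 1)) (h := fun t => t ^ ((u + v) / 2 - 1))
    hba (intervalIntegral.intervalIntegrable_rpow' (by linarith))
    (intervalIntegral.intervalIntegrable_rpow' (by linarith))
    (intervalIntegral.intervalIntegrable_rpow' (by linarith))
    (fun t ht => Real.rpow_nonneg (hb.trans ht.1.le) _)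
    (fun t ht => Real.rpow_nonneg (hb.trans ht.1.le) _)
    (fun t ht => by
      have ht0 : 0 < t := hb.trans_lt ht.1
      rw [← Real.rpow_mul_natCast ht0.le, ← Real.rpow_add ht0]
      exact le_of_eq (congrArg _ (by ring)))
  rwa [integral_rpow_sub_one hu, integral_rpow_sub_one hv,
    integral_rpow_sub_one (by positivity)] at key

theorem mul_rpow_sub_one_mul_sub_le_rpow_sub_rpow {s a b c : ℝ} (hs : 1 ≤ s) (hc : 0 ≤ c)
    (hcb : c ≤ b) (hba : b ≤ a) : s * c ^ (s - 1) * (a - b) ≤ a ^ s - b ^ s := by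
  have key := intervalIntegral.integral_mono_on hba intervalIntegrable_const
    (intervalIntegral.intervalIntegrable_rpow' (by linarith))
    (fun t ht => Real.rpow_le_rpow hc (hcb.trans ht.1) (by linarith : 0 ≤ s - 1))
  rw [intervalIntegral.integral_const, smul_eq_mul, integral_rpow_sub_one (by linarith),
    le_div_iff₀ (by linarith)] at key
  linarith

theorem rpow_sub_one_mul_abs_sub_le_abs_rpow_sub_rpow {s a b c : ℝ} (hs : 1 ≤ s) (hc : 0 ≤ c)
    (hca : c ≤ a) (hcb : c ≤ b) : c ^ (s - 1) * |a - b| ≤ |a ^ s - b ^ s| := by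
  wlog hba : b ≤ a generalizing a b
  · rw [abs_sub_comm a, abs_sub_comm (a ^ s)]
    exact this hcb hca (le_of_not_ge hba)
  have hmono := mul_rpow_sub_one_mul_sub_le_rpow_sub_rpow hs hc hcb hba
  have hcs : 0 ≤ c ^ (s - 1) * (a - b) := mul_nonneg (Real.rpow_nonneg hc _) (by linarith)
  have hle : c ^ (s - 1) * (a - b) ≤ a ^ s - b ^ s := by nlinarith
  rw [abs_of_nonneg (sub_nonneg.mpr hba), abs_of_nonneg (hcs.trans hle)]
  exact hle

/-- Appendix inequalities (Lemma A.1): for every real `m > 1`,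
(i) `(a−b)(a^{m−1}−b^{m−1}) ≥ (4(m−1)/m²)(a^{m/2}−b^{m/2})²` for `a, b ≥ 0`;
(ii) `(a²−b²)(a^{m−1}−b^{m−1}) ≥ (8(m−1)/(m+1)²)(a^{(m+1)/2}−b^{(m+1)/2})²` for
`a, b ≥ 0`;
(iii) `(a−b)² ≤ c^{−(m−1)}(a^{(m+1)/2}−b^{(m+1)/2})²` for `a, b ≥ c > 0`.
All powers are real powers. -/
theorem useful_inequalities (m : ℝ) (hm : 1 < m) :
    (∀ a b : ℝ, 0 ≤ a → 0 ≤ b →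
      (4 * (m - 1) / m ^ 2) * (a ^ (m/2) - b ^ (m/2)) ^ 2
        ≤ (a - b) * (a ^ (m - 1) - b ^ (m - 1))) ∧
    (∀ a b : ℝ, 0 ≤ a → 0 ≤ b →
      (8 * (m - 1) / (m + 1) ^ 2) * (a ^ ((m + 1)/2) - b ^ ((m + 1)/2)) ^ 2
        ≤ (a ^ 2 - b ^ 2) * (a ^ (m - 1) - b ^ (m - 1))) ∧
    (∀ a b c : ℝ, 0 < c → c ≤ a → c ≤ b →
      (a - b) ^ 2 ≤ c ^ (-(m - 1)) * (a ^ ((m + 1)/2) - b ^ ((m + 1)/2)) ^ 2) := by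
  have hm1 : 0 < m - 1 := by linarith
  refine ⟨fun a b ha hb => ?_, fun a b ha hb => ?_, fun a b c hc hca hcb => ?_⟩
  · have key := sq_rpow_sub_rpow_div_midpoint_le_mul hm1 one_pos ha hb
    rw [show (m - 1 + 1) / 2 = m / 2 by ring, Real.rpow_one, Real.rpow_one] at key
    field_simp at key ⊢
    linarith
  · have key := sq_rpow_sub_rpow_div_midpoint_le_mul two_pos hm1 ha hb
    rw [show (2 + (m - 1)) / 2 = (m + 1) / 2 by ring, Real.rpow_two, Real.rpow_two] at key
    field_simp at key ⊢
    linarith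
  · have key := rpow_sub_one_mul_abs_sub_le_abs_rpow_sub_rpow (s := (m + 1) / 2) (by linarith)
      hc.le hca hcb
    rw [Real.rpow_neg hc.le, inv_mul_eq_div, le_div_iff₀ (by positivity)]
    calc (a - b) ^ 2 * c ^ (m - 1) = (c ^ ((m + 1) / 2 - 1) * |a - b|) ^ 2 := by
          rw [mul_pow, sq_abs, ← Real.rpow_mul_natCast hc.le]
          ring_nf
      _ ≤ |a ^ ((m + 1) / 2) - b ^ ((m + 1) / 2)| ^ 2 := by gcongr
      _ = _ := sq_abs _
end
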